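/- arXiv:1706.07894 — 2 statements merged into one kernel-verified Lean document; each statement's English description precedes it below -/
import Mathlib

section
/- Let y : [0,l] → [−1,1] be absolutely continuous with y(0) = −1, y(l) = 1, |y'(t)| ≤ √(1 − y(t)²) a.e., and l ≤ π. Then l = π, y is strictly increasing, y'(t) = √(1 − y(t)²) for a.e. t, and y(t) = −cos t for all t ∈ [0,π]. -/
open Real MeasureTheory Set


private lemma gmono {a L : ℝ} (hL : 0 ≤ L) (ha : -1 ≤ a)
    (h : ∀ x ∈ Icc a (0:ℝ), -x ≤ L * Real.sqrt (1 - x ^ 2)) :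
    MonotoneOn (fun x => L * x - Real.sqrt (1 - x ^ 2)) (Icc a 1) := by
  have hd : ∀ x ∈ Ioo a (1:ℝ), HasDerivAt (fun x => L * x - Real.sqrt (1 - x ^ 2))
      (L * 1 - (-(2 * x) / (2 * Real.sqrt (1 - x ^ 2)))) x := by
    intro x hx
    have h1 : (0:ℝ) < 1 - x ^ 2 := by nlinarith [hx.1, hx.2, ha]
    have hd1 : HasDerivAt (fun x : ℝ => 1 - x ^ 2) (-(2 * x)) x := by
      simpa using (hasDerivAt_pow 2 x).const_sub 1
    exact ((hasDerivAt_id x).const_mul L).sub (hd1.sqrt h1.ne')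
  apply monotoneOn_of_deriv_nonneg (convex_Icc a 1)
  · exact (continuous_const.mul continuous_id).sub
      (Real.continuous_sqrt.comp (continuous_const.sub (continuous_pow 2))) |>.continuousOn
  · intro x hx
    rw [interior_Icc] at hx
    exact (hd x hx).differentiableAt.differentiableWithinAt
  · intro x hx
    rw [interior_Icc] at hx
    rw [(hd x hx).deriv]
    have h1 : (0:ℝ) < 1 - x ^ 2 := by nlinarith [hx.1, hx.2, ha]
    have hs : 0 < Real.sqrt (1 - x ^ 2) := Real.sqrt_pos.mpr h1
    rw [mul_one, sub_nonneg, div_le_iff₀ (by positivity)]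
    rcases le_or_gt 0 x with hx0 | hx0
    · nlinarith
    · have := h x ⟨hx.1.le, hx0.le⟩
      nlinarith

set_option maxHeartbeats 1000000 in
private lemma key (l : ℝ) (y y' : ℝ → ℝ) (hl0 : (0:ℝ) ≤ l)
    (hcont : ContinuousOn y (Icc 0 l))
    (hy0 : y 0 = -1)
    (hrange : ∀ t ∈ Icc 0 l, y t ∈ Icc (-1 : ℝ) 1)
    (hint : IntegrableOn y' (Icc 0 l))
    (hftc : ∀ s ∈ Icc 0 l, y s = -1 + ∫ t in (0:ℝ)..s, y' t)
    (hbound : ∀ᵐ t ∂(volume.restrict (Icc 0 l)), |y' t| ≤ Real.sqrt (1 - (y t) ^ 2)) :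
    ∀ s ∈ Icc 0 l, s < π → y s ≤ -Real.cos s := by
  intro s hs hsπ
  by_contra hys
  push_neg at hys
  have hsl : s ≤ l := hs.2
  -- choose ε
  obtain ⟨ε, hε0, hεπ, hεlt⟩ : ∃ ε : ℝ, 0 < ε ∧ s + ε < π ∧ -Real.cos (s + ε) < y s := by
    have hc1 : Filter.Tendsto (fun ε : ℝ => -Real.cos (s + ε)) (nhds 0) (nhds (-Real.cos s)) := by
      have : ContinuousAt (fun ε : ℝ => -Real.cos (s + ε)) 0 := by fun_prop
      simpa using this.tendsto
    have hc2 : Filter.Tendsto (fun ε : ℝ => s + ε) (nhds 0) (nhds s) := by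
      have : ContinuousAt (fun ε : ℝ => s + ε) 0 := by fun_prop
      simpa using this.tendsto
    have h1 : ∀ᶠ ε in nhds (0:ℝ), -Real.cos (s + ε) < y s := hc1.eventually_lt_const hys
    have h2 : ∀ᶠ ε in nhds (0:ℝ), s + ε < π := hc2.eventually_lt_const hsπ
    have h3 : ∀ᶠ ε in nhdsWithin (0:ℝ) (Ioi 0), (-Real.cos (s + ε) < y s ∧ s + ε < π) ∧ 0 < ε :=
      (((h1.and h2).filter_mono nhdsWithin_le_nhds).and eventually_mem_nhdsWithin)
    obtain ⟨ε, hε⟩ := h3.exists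
    exact ⟨ε, hε.2, hε.1.2, hε.1.1⟩
  set z : ℝ → ℝ := fun t => -Real.cos (t + ε) with hzdef
  have hzc : Continuous z := by fun_prop
  set L : ℝ := max (Real.cos ε / Real.sin ε) 0 with hLdef
  have hL0 : 0 ≤ L := le_max_right _ _
  have hsinε : 0 < Real.sin ε := Real.sin_pos_of_pos_of_lt_pi hε0 (by nlinarith [hs.1])
  -- the set S and t₁
  set S : Set ℝ := {t ∈ Icc 0 s | y t ≤ z t} with hSdef
  have hycont : ContinuousOn y (Icc 0 s) := hcont.mono (Icc_subset_Icc_right hsl)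
  have hScl : IsClosed S := by
    have : S = Icc 0 s ∩ (fun t => y t - z t) ⁻¹' (Iic 0) := by
      ext t; simp [hSdef, sub_nonpos]
    rw [this]
    exact ContinuousOn.preimage_isClosed_of_isClosed (hycont.sub hzc.continuousOn)
      isClosed_Icc isClosed_Iic
  have hS0 : (0:ℝ) ∈ S := by
    refine ⟨⟨le_refl 0, hs.1⟩, ?_⟩
    rw [hy0]
    simp only [hzdef, zero_add, neg_le_neg_iff]
    exact Real.cos_le_one ε
  have hSsub : S ⊆ Icc 0 s := fun t ht => ht.1
  have hbdd : BddAbove S := BddAbove.mono hSsub bddAbove_Icc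
  set t₁ : ℝ := sSup S with ht₁def
  have ht₁S : t₁ ∈ S := hScl.csSup_mem ⟨0, hS0⟩ hbdd
  have ht₁0 : 0 ≤ t₁ := ht₁S.1.1
  have ht₁s' : t₁ ≤ s := ht₁S.1.2
  have h1 : ∀ t, t₁ < t → t ≤ s → z t < y t := by
    intro t ht ht'
    by_contra hc
    push_neg at hc
    have : t ∈ S := ⟨⟨le_trans ht₁0 ht.le, ht'⟩, hc⟩
    exact absurd (le_csSup hbdd this) (not_le.mpr ht)
  have ht₁s : t₁ < s := by
    rcases ht₁s'.lt_or_eq with h | h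
    · exact h
    · exfalso; rw [h] at ht₁S; exact absurd ht₁S.2 (not_le.mpr hεlt)
  have hyzt₁ : y t₁ = z t₁ := by
    refine le_antisymm ht₁S.2 ?_
    have hcw : ContinuousWithinAt (fun t => y t - z t) (Ioc t₁ s) t₁ := by
      refine ContinuousWithinAt.sub ?_ (hzc.continuousAt.continuousWithinAt)
      exact (hcont t₁ ⟨ht₁0, le_trans ht₁s' hsl⟩).mono
        (fun u hu => ⟨le_trans ht₁0 hu.1.le, le_trans hu.2 hsl⟩)
    have hne : (nhdsWithin t₁ (Ioc t₁ s)).NeBot := by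
      rw [← mem_closure_iff_nhdsWithin_neBot, closure_Ioc ht₁s.ne]
      exact ⟨le_refl _, ht₁s.le⟩
    have hev : ∀ᶠ u in nhdsWithin t₁ (Ioc t₁ s), 0 ≤ y u - z u := by
      filter_upwards [eventually_mem_nhdsWithin] with u hu
      exact sub_nonneg.mpr (h1 u hu.1 hu.2).le
    have h5 := ge_of_tendsto hcw hev
    simp only at h5
    linarith [h5]
  -- globalized w
  set Y : ℝ → ℝ := Set.IccExtend hl0 ((Icc 0 l).restrict y) with hYdef
  have hYc : Continuous Y := ContinuousOn.restrict hcont |>.Icc_extend'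
  have hYeq : ∀ u ∈ Icc 0 l, Y u = y u := fun u hu => by
    rw [hYdef, Set.IccExtend_of_mem hl0 _ hu]; rfl
  set w : ℝ → ℝ := fun u => Y u - z u with hwdef
  have hwc : Continuous w := hYc.sub hzc
  have hIccsub : Icc t₁ s ⊆ Icc 0 l := Icc_subset_Icc ht₁0 hsl
  have hw_eq : ∀ u ∈ Icc t₁ s, w u = y u - z u := fun u hu => by
    rw [hwdef]; simp only; rw [hYeq u (hIccsub hu)]
  have hw_nonneg : ∀ u ∈ Icc t₁ s, 0 ≤ w u := by
    intro u hu
    rw [hw_eq u hu]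
    rcases hu.1.lt_or_eq with h | h
    · exact sub_nonneg.mpr (h1 u h hu.2).le
    · rw [← h, hyzt₁]; simp
  -- pointwise sqrt comparison
  have hptwise : ∀ u ∈ Icc t₁ s, Real.sqrt (1 - y u ^ 2) ≤ Real.sin (u + ε) + L * w u := by
    intro u hu
    have hu0 : 0 ≤ u := le_trans ht₁0 hu.1
    have huπ : u + ε ≤ π := by linarith [hu.2]
    have huε0 : 0 ≤ u + ε := by linarith
    have hsinu : Real.sqrt (1 - z u ^ 2) = Real.sin (u + ε) := by
      have h2 : (1:ℝ) - z u ^ 2 = Real.sin (u + ε) ^ 2 := by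
        simp only [hzdef]
        nlinarith [Real.sin_sq_add_cos_sq (u + ε)]
      rw [h2]
      exact Real.sqrt_sq (Real.sin_nonneg_of_nonneg_of_le_pi huε0 huπ)
    have hzlb : -Real.cos ε ≤ z u := by
      simp only [hzdef, neg_le_neg_iff]
      exact Real.cos_le_cos_of_nonneg_of_le_pi hε0.le huπ (by linarith)
    have hzub : z u ≤ 1 := by
      simp only [hzdef]
      linarith [Real.neg_one_le_cos (u + ε)]
    have hzy : z u ≤ y u := by
      rcases hu.1.lt_or_eq with h | h
      · exact (h1 u h hu.2).le
      · rw [← h, hyzt₁]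
    have hyub : y u ≤ 1 := (hrange u (hIccsub hu)).2
    have hslope : ∀ x ∈ Icc (-Real.cos ε) (0:ℝ), -x ≤ L * Real.sqrt (1 - x ^ 2) := by
      intro x hx
      have hcosε : 0 ≤ Real.cos ε := by
        rcases hx with ⟨hx1, hx2⟩; linarith
      have hx2' : x ^ 2 ≤ Real.cos ε ^ 2 := by nlinarith [hx.1, hx.2]
      have h2 : Real.sin ε ≤ Real.sqrt (1 - x ^ 2) := by
        rw [show Real.sin ε = Real.sqrt (Real.sin ε ^ 2) from
          (Real.sqrt_sq hsinε.le).symm]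
        apply Real.sqrt_le_sqrt
        nlinarith [Real.sin_sq_add_cos_sq ε]
      have hLs : Real.cos ε ≤ L * Real.sin ε := by
        have : Real.cos ε / Real.sin ε ≤ L := le_max_left _ _
        calc Real.cos ε = (Real.cos ε / Real.sin ε) * Real.sin ε := by
              field_simp
          _ ≤ L * Real.sin ε := by nlinarith
      calc -x ≤ Real.cos ε := by linarith [hx.1]
        _ ≤ L * Real.sin ε := hLs
        _ ≤ L * Real.sqrt (1 - x ^ 2) := by nlinarith
    have hmono := gmono (a := -Real.cos ε) (L := L) hL0
      (by linarith [Real.cos_le_one ε]) hslope ⟨hzlb, hzub⟩ ⟨le_trans hzlb hzy, hyub⟩ hzy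
    simp only at hmono
    rw [hsinu] at hmono
    rw [hw_eq u hu]
    linarith
  -- the integral inequality
  have hkey : ∀ t ∈ Icc t₁ s, w t ≤ L * ∫ u in t₁..t, w u := by
    intro t ht
    have ht₁t : t₁ ≤ t := ht.1
    have htl : t ∈ Icc 0 l := hIccsub ht
    have hsub2 : Icc t₁ t ⊆ Icc 0 l := Icc_subset_Icc ht₁0 htl.2
    have hi1 : IntervalIntegrable y' volume 0 t₁ :=
      (intervalIntegrable_iff_integrableOn_Icc_of_le ht₁0).mpr
        (hint.mono_set (Icc_subset_Icc_right (le_trans ht₁s' hsl)))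
    have hi2 : IntervalIntegrable y' volume t₁ t :=
      (intervalIntegrable_iff_integrableOn_Icc_of_le ht₁t).mpr (hint.mono_set hsub2)
    have hisin : IntervalIntegrable (fun u => Real.sin (u + ε)) volume t₁ t :=
      (Continuous.intervalIntegrable (by fun_prop) _ _)
    have hyd : y t - y t₁ = ∫ u in t₁..t, y' u := by
      rw [hftc t htl, hftc t₁ ⟨ht₁0, le_trans ht₁s' hsl⟩]
      have := intervalIntegral.integral_add_adjacent_intervals hi1 hi2
      linarith
    have hzd : z t - z t₁ = ∫ u in t₁..t, Real.sin (u + ε) := by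
      rw [intervalIntegral.integral_comp_add_right (fun u => Real.sin u) ε,
        integral_sin]
      simp only [hzdef]
      ring
    have hwt : w t = ∫ u in t₁..t, (y' u - Real.sin (u + ε)) := by
      rw [intervalIntegral.integral_sub hi2 hisin, ← hyd, ← hzd,
        hw_eq t ht, hyzt₁]
      ring
    have hmono2 : (∫ u in t₁..t, (y' u - Real.sin (u + ε))) ≤ ∫ u in t₁..t, L * w u := by
      apply intervalIntegral.integral_mono_ae_restrict ht₁t (hi2.sub hisin)
        ((continuous_const.mul hwc).intervalIntegrable _ _)
      have hae1 : ∀ᵐ u ∂volume.restrict (Icc t₁ t), |y' u| ≤ Real.sqrt (1 - y u ^ 2) :=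
        hbound.filter_mono (ae_mono (Measure.restrict_mono hsub2 le_rfl))
      have hae2 : ∀ᵐ u ∂volume.restrict (Icc t₁ t), u ∈ Icc t₁ t :=
        ae_restrict_mem measurableSet_Icc
      filter_upwards [hae1, hae2] with u hu1 hu2
      have hu' : u ∈ Icc t₁ s := ⟨hu2.1, le_trans hu2.2 ht.2⟩
      have h3 := hptwise u hu'
      have h4 : y' u ≤ |y' u| := le_abs_self _
      show y' u - Real.sin (u + ε) ≤ L * w u
      linarith
    calc w t = ∫ u in t₁..t, (y' u - Real.sin (u + ε)) := hwt
      _ ≤ ∫ u in t₁..t, L * w u := hmono2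
      _ = L * ∫ u in t₁..t, w u := intervalIntegral.integral_const_mul L w
  -- Gronwall
  set W : ℝ → ℝ := fun t => ∫ u in t₁..t, w u with hWdef
  have hW' : ∀ t : ℝ, HasDerivAt W (w t) t := fun t =>
    intervalIntegral.integral_hasDerivAt_right (hwc.intervalIntegrable _ _)
      (hwc.stronglyMeasurableAtFilter _ _) hwc.continuousAt
  have hgron := norm_le_gronwallBound_of_norm_deriv_right_le
    (f := W) (f' := w) (δ := 0) (K := L) (ε := 0) (a := t₁) (b := s)
    (fun x _ => (hW' x).continuousAt.continuousWithinAt)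
    (fun x _ => (hW' x).hasDerivWithinAt)
    (by simp [hWdef])
    ?_
  · have hWs := hgron s ⟨ht₁s.le, le_refl s⟩
    rw [gronwallBound_ε0_δ0] at hWs
    have hpos : 0 < W s := by
      apply intervalIntegral.intervalIntegral_pos_of_pos_on (hwc.intervalIntegrable _ _) _ ht₁s
      intro x hx
      have hx' : x ∈ Icc t₁ s := ⟨hx.1.le, hx.2.le⟩
      rw [hw_eq x hx']
      exact sub_pos.mpr (h1 x hx.1 hx.2.le)
    rw [Real.norm_of_nonneg hpos.le] at hWs
    linarith
  · intro x hx
    have hx' : x ∈ Icc t₁ s := ⟨hx.1, hx.2.le⟩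
    have h0w := hw_nonneg x hx'
    have hW0 : 0 ≤ W x := intervalIntegral.integral_nonneg hx.1
      (fun u hu => hw_nonneg u ⟨hu.1, le_trans hu.2 hx.2.le⟩)
    rw [Real.norm_of_nonneg h0w, Real.norm_of_nonneg hW0, add_zero]
    exact hkey x hx'


set_option maxHeartbeats 1000000

/-- if `y : [0,l] → [-1,1]` is absolutely continuous (encoded by an a.e.
derivative `y'` together with the fundamental theorem of calculus), `y(0) = -1`,
`y(l) = 1`, `|y'| ≤ √(1-y²)` a.e., and `l ≤ π`, then `l = π`, `y` is strictly
increasing, `y' = √(1-y²)` a.e., and `y(t) = -cos t` on `[0,π]`. -/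
theorem ode_rigidity (l : ℝ) (y y' : ℝ → ℝ)
    (hl0 : 0 < l) (hlπ : l ≤ π)
    (hcont : ContinuousOn y (Icc 0 l))
    (hy0 : y 0 = -1) (hyl : y l = 1)
    (hrange : ∀ t ∈ Icc 0 l, y t ∈ Icc (-1 : ℝ) 1)
    (hint : IntegrableOn y' (Icc 0 l))
    (hderiv : ∀ᵐ t ∂(volume.restrict (Icc 0 l)), HasDerivAt y (y' t) t)
    (hftc : ∀ s ∈ Icc 0 l, y s = -1 + ∫ t in (0:ℝ)..s, y' t)
    (hbound : ∀ᵐ t ∂(volume.restrict (Icc 0 l)), |y' t| ≤ Real.sqrt (1 - (y t) ^ 2)) :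
    l = π ∧ StrictMonoOn y (Icc 0 π) ∧
      (∀ᵐ t ∂(volume.restrict (Icc 0 π)), y' t = Real.sqrt (1 - (y t) ^ 2)) ∧
      ∀ t ∈ Icc (0:ℝ) π, y t = -Real.cos t := by
  have hlor : l = π := by
    by_contra h
    have hlt : l < π := lt_of_le_of_ne hlπ h
    have h2 := key l y y' hl0.le hcont hy0 hrange hint hftc hbound l ⟨hl0.le, le_refl l⟩ hlt
    rw [hyl] at h2
    have h3 : Real.cos π < Real.cos l :=
      Real.strictAntiOn_cos ⟨hl0.le, hlπ⟩ ⟨Real.pi_nonneg, le_refl π⟩ hlt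
    rw [Real.cos_pi] at h3
    linarith
  subst hlor
  -- upper bound
  have hupper : ∀ t ∈ Icc (0:ℝ) π, y t ≤ -Real.cos t := by
    intro t ht
    rcases ht.2.lt_or_eq with h | h
    · exact key π y y' Real.pi_nonneg hcont hy0 hrange hint hftc hbound t ht h
    · rw [h, hyl, Real.cos_pi]; norm_num
  -- reflection
  have hmaps : ∀ t ∈ Icc (0:ℝ) π, π - t ∈ Icc (0:ℝ) π := fun t ht =>
    ⟨by linarith [ht.2], by linarith [ht.1]⟩
  have hcontr : ContinuousOn (fun t => -y (π - t)) (Icc 0 π) := by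
    refine ContinuousOn.neg ?_
    exact hcont.comp ((continuous_const.sub continuous_id).continuousOn) hmaps
  have hintπ : IntervalIntegrable y' volume 0 π :=
    (intervalIntegrable_iff_integrableOn_Icc_of_le Real.pi_nonneg).mpr hint
  have hintr : IntegrableOn (fun t => y' (π - t)) (Icc 0 π) := by
    have h2 := hintπ.comp_sub_left π
    simp only [sub_zero, sub_self] at h2
    exact (intervalIntegrable_iff_integrableOn_Icc_of_le Real.pi_nonneg).mp h2.symm
  have hI : (∫ t in (0:ℝ)..π, y' t) = 2 := by
    have := hftc π ⟨Real.pi_nonneg, le_refl π⟩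
    rw [hyl] at this; linarith
  have hftcr : ∀ s ∈ Icc (0:ℝ) π, -y (π - s) = -1 + ∫ t in (0:ℝ)..s, y' (π - t) := by
    intro s hs
    have h1 : (∫ t in (0:ℝ)..s, y' (π - t)) = ∫ t in (π - s)..(π - 0), y' t :=
      intervalIntegral.integral_comp_sub_left y' π
    have hi1 : IntervalIntegrable y' volume 0 (π - s) :=
      (intervalIntegrable_iff_integrableOn_Icc_of_le (by linarith [hs.2])).mpr
        (hint.mono_set (Icc_subset_Icc_right (by linarith [hs.1])))
    have hi2 : IntervalIntegrable y' volume (π - s) π :=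
      (intervalIntegrable_iff_integrableOn_Icc_of_le (by linarith [hs.1])).mpr
        (hint.mono_set (Icc_subset_Icc (by linarith [hs.2]) (le_refl π)))
    have h2 := intervalIntegral.integral_add_adjacent_intervals hi1 hi2
    have h3 := hftc (π - s) (hmaps s hs)
    rw [h1, sub_zero]
    rw [h3]
    rw [← h2] at hI
    linarith
  have hbr : ∀ᵐ t ∂(volume.restrict (Icc (0:ℝ) π)),
      |y' (π - t)| ≤ Real.sqrt (1 - (-y (π - t)) ^ 2) := by
    have hb1 : ∀ᵐ t ∂(volume : Measure ℝ), t ∈ Icc (0:ℝ) π → |y' t| ≤ Real.sqrt (1 - y t ^ 2) :=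
      (ae_restrict_iff' measurableSet_Icc).mp hbound
    have hmp : MeasurePreserving (fun t : ℝ => π - t) volume volume :=
      Measure.measurePreserving_sub_left volume π
    have hb2 := hmp.quasiMeasurePreserving.ae hb1
    rw [ae_restrict_iff' measurableSet_Icc]
    filter_upwards [hb2] with t h2 ht
    have := h2 (hmaps t ht)
    simpa [neg_pow] using this
  have hlower := key π (fun t => -y (π - t)) (fun t => y' (π - t)) Real.pi_nonneg hcontr
    (by simp [hyl]) (fun t ht => by
      have h9 := hrange (π - t) (hmaps t ht)
      simp only [mem_Icc] at h9 ⊢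
      constructor <;> [linarith [h9.2]; linarith [h9.1]])
    hintr hftcr hbr
  have hlower' : ∀ t ∈ Icc (0:ℝ) π, -Real.cos t ≤ y t := by
    intro t ht
    rcases ht.1.eq_or_lt with h | h
    · rw [← h, hy0, Real.cos_zero]
    · have hs : π - t ∈ Icc (0:ℝ) π := hmaps t ht
      have := hlower (π - t) hs (by linarith)
      rw [Real.cos_pi_sub] at this
      simp only [sub_sub_cancel] at this
      linarith
  have heq : ∀ t ∈ Icc (0:ℝ) π, y t = -Real.cos t := fun t ht =>
    le_antisymm (hupper t ht) (hlower' t ht)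
  refine ⟨rfl, ?_, ?_, heq⟩
  · intro a ha b hb hab
    rw [heq a ha, heq b hb, neg_lt_neg_iff]
    exact Real.strictAntiOn_cos ha hb hab
  · -- a.e. equality
    have hsqrt : ∀ t ∈ Icc (0:ℝ) π, Real.sqrt (1 - y t ^ 2) = Real.sin t := by
      intro t ht
      rw [heq t ht]
      have h2 : (1:ℝ) - (-Real.cos t) ^ 2 = Real.sin t ^ 2 := by
        nlinarith [Real.sin_sq_add_cos_sq t]
      rw [h2]
      exact Real.sqrt_sq (Real.sin_nonneg_of_nonneg_of_le_pi ht.1 ht.2)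
    set f : ℝ → ℝ := fun t => Real.sin t - y' t with hfdef
    have hf_nonneg : 0 ≤ᵐ[volume.restrict (Icc (0:ℝ) π)] f := by
      filter_upwards [hbound, ae_restrict_mem measurableSet_Icc] with t h1 h2
      have h3 : y' t ≤ Real.sqrt (1 - y t ^ 2) := le_trans (le_abs_self _) h1
      rw [hsqrt t h2] at h3
      simpa [hfdef] using sub_nonneg.mpr h3
    have hf_int : Integrable f (volume.restrict (Icc (0:ℝ) π)) :=
      (Real.continuous_sin.integrableOn_Icc).sub hint
    have hf_zero : ∫ t in Icc (0:ℝ) π, f t = 0 := by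
      rw [hfdef]
      rw [integral_sub Real.continuous_sin.integrableOn_Icc hint]
      have h1 : ∫ t in Icc (0:ℝ) π, Real.sin t = 2 := by
        rw [integral_Icc_eq_integral_Ioc,
          ← intervalIntegral.integral_of_le Real.pi_nonneg, integral_sin]
        norm_num
      have h2 : ∫ t in Icc (0:ℝ) π, y' t = 2 := by
        rw [integral_Icc_eq_integral_Ioc,
          ← intervalIntegral.integral_of_le Real.pi_nonneg]
        exact hI
      rw [h1, h2]; ring
    have h4 := (integral_eq_zero_iff_of_nonneg_ae hf_nonneg hf_int).mp hf_zero
    filter_upwards [h4, ae_restrict_mem measurableSet_Icc] with t h5 h6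
    have h7 : Real.sin t - y' t = 0 := h5
    rw [hsqrt t h6]
    linarith
end

section
/- For any a ∈ [0,1) and continuous odd function z on [−1,1] with 1 − u² ± 2az(u) > 0 for u ∈ (−1,1), one has ∫₀¹ [1/√(1−u²+2az(u)) + 1/√(1−u²−2az(u))] du ≥ π + 3a²(∫₀¹ z(u)/√(1−u²) du)² , provided |2az(u)| ≤ (1−u²)/2 on (−1,1). -/
/-!
With `s = √(1 - t²)` one has `(1/√(1+t) + 1/√(1-t))² = (2 + 2s)/s²`, and a polynomial inequality
in `s` gives `1/√(1+t) + 1/√(1-t) ≥ 2 + 3t²/4`. Scaling by `x = 1 - u² ≤ 1` with `t = 2az(u)/x`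
yields the pointwise bound `1/√(x+2az) + 1/√(x-2az) ≥ 2/√x + 3 (a z/√x)²`. Integrating over
`[0,1]`, the first term gives `2 arcsin 1 = π`, and Jensen's inequality `(∫₀¹ w)² ≤ ∫₀¹ w²` with
`w = a z/√x` bounds the second. The condition `|2az| ≤ x/2` makes `w` bounded and the integrand
dominated by `2√2/√x`, so every integrand is integrable.
-/

open Real Set MeasureTheory intervalIntegral

lemma two_add_le_one_div_sqrt_one_add_add_one_div_sqrt_one_sub {t : ℝ} (ht : |t| < 1) :
    2 + 3 / 4 * t ^ 2 ≤ 1 / √(1 + t) + 1 / √(1 - t) := by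
  obtain ⟨ht₁, ht₂⟩ := abs_lt.1 ht
  have hP : √(1 + t) ^ 2 = 1 + t := sq_sqrt (by linarith)
  have hQ : √(1 - t) ^ 2 = 1 - t := sq_sqrt (by linarith)
  have hP_pos : 0 < √(1 + t) := sqrt_pos.2 (by linarith)
  have hQ_pos : 0 < √(1 - t) := sqrt_pos.2 (by linarith)
  set s := √(1 + t) * √(1 - t)
  have hs_sq : s ^ 2 = 1 - t ^ 2 := by rw [mul_pow, hP, hQ]; ring
  have hs_pos : 0 < s := by positivity
  have hs_le : s ≤ 1 := by nlinarith
  have hrhs_sq : (1 / √(1 + t) + 1 / √(1 - t)) ^ 2 = (2 + 2 * s) / s ^ 2 := by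
    have hsum : 1 / √(1 + t) + 1 / √(1 - t) = (√(1 + t) + √(1 - t)) / s := by
      field_simp; ring
    rw [hsum, div_pow]
    congr 1
    linear_combination hP + hQ
  -- `2 + 2s - s²(2 + 3(1 - s²)/4)² = (1 - s)²(32 + 96s + 39s² - 18s³ - 9s⁴)/16`
  have hpoly : s ^ 2 * (2 + 3 / 4 * (1 - s ^ 2)) ^ 2 ≤ 2 + 2 * s := by
    have : 0 ≤ 32 + 96 * s + 39 * s ^ 2 - 18 * s ^ 3 - 9 * s ^ 4 := by nlinarith
    nlinarith [mul_nonneg (sq_nonneg (1 - s)) this]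
  rw [← pow_le_pow_iff_left₀ (by positivity) (by positivity) two_ne_zero, hrhs_sq,
    le_div_iff₀ (by positivity), show t ^ 2 = 1 - s ^ 2 by linarith]
  linarith

lemma two_add_div_sqrt_le_one_div_sqrt_add_add_one_div_sqrt_sub {x b : ℝ} (hx : 0 < x)
    (hb : |b| < x) :
    (2 + 3 / 4 * (b / x) ^ 2) / √x ≤ 1 / √(x + b) + 1 / √(x - b) := by
  have ht : |b / x| < 1 := by rwa [abs_div, abs_of_pos hx, div_lt_one hx]
  have hscale : ∀ c, √(x + c) = √x * √(1 + c / x) := fun c => by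
    rw [← sqrt_mul hx.le, mul_add, mul_div_cancel₀ _ hx.ne', mul_one]
  have hrhs : 1 / √(x + b) + 1 / √(x - b) = (1 / √(1 + b / x) + 1 / √(1 - b / x)) / √x := by
    rw [hscale, sub_eq_add_neg, hscale, neg_div, ← sub_eq_add_neg]
    field_simp
  rw [hrhs]
  exact div_le_div_of_nonneg_right
    (two_add_le_one_div_sqrt_one_add_add_one_div_sqrt_one_sub ht) (sqrt_nonneg x)

lemma two_div_sqrt_add_le_one_div_sqrt_add_add_one_div_sqrt_sub {x b : ℝ} (hx₀ : 0 < x)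
    (hx₁ : x ≤ 1) (hb : |b| < x) :
    2 / √x + 3 / 4 * b ^ 2 / x ≤ 1 / √(x + b) + 1 / √(x - b) := by
  refine le_trans ?_ (two_add_div_sqrt_le_one_div_sqrt_add_add_one_div_sqrt_sub hx₀ hb)
  have hsx : 0 < √x := sqrt_pos.2 hx₀
  have hxx : x ^ 2 * √x ≤ x := by
    have : √x ≤ 1 := sqrt_le_one.2 hx₁
    nlinarith
  calc 2 / √x + 3 / 4 * b ^ 2 / x ≤ 2 / √x + 3 / 4 * b ^ 2 / (x ^ 2 * √x) := by gcongr
    _ = (2 + 3 / 4 * (b / x) ^ 2) / √x := by field_simp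

lemma sq_intervalIntegral_le_mul_intervalIntegral_sq {f : ℝ → ℝ} {a b : ℝ} (hab : a ≤ b)
    (hf : IntervalIntegrable f volume a b)
    (hf2 : IntervalIntegrable (fun x => f x ^ 2) volume a b) :
    (∫ x in a..b, f x) ^ 2 ≤ (b - a) * ∫ x in a..b, f x ^ 2 := by
  rcases hab.eq_or_lt with rfl | hab
  · simp
  have hlen : volume.real (Ioc a b) = b - a := volume_real_Ioc_of_le hab.le
  have hjensen := (even_two.convexOn_pow (𝕜 := ℝ)).map_set_average_le (continuousOn_pow 2)
    isClosed_univ (by simp [hab]) measure_Ioc_lt_top.ne (ae_of_all _ fun _ => mem_univ _)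
    hf.1 hf2.1
  simp only [setAverage_eq, hlen, smul_eq_mul] at hjensen
  rw [integral_of_le hab.le, integral_of_le hab.le]
  have hpos : 0 < b - a := sub_pos.2 hab
  rw [mul_pow, inv_pow, ← div_eq_inv_mul, ← div_eq_inv_mul,
    div_le_div_iff₀ (by positivity) hpos] at hjensen
  nlinarith

lemma intervalIntegrable_one_div_sqrt_one_sub_sq :
    IntervalIntegrable (fun u => 1 / √(1 - u ^ 2)) volume 0 1 := by
  simpa only [one_div, sqrt_inv] using
    Polynomial.Chebyshev.intervalIntegrable_sqrt_one_sub_sq_inv.mono_set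
      (uIcc_subset_uIcc (a₁ := 0) (b₁ := 1) (by simp) (by simp))

lemma integral_one_div_sqrt_one_sub_sq : ∫ u in (0 : ℝ)..1, 1 / √(1 - u ^ 2) = π / 2 := by
  rw [integral_eq_sub_of_hasDerivAt_of_le zero_le_one continuous_arcsin.continuousOn
    (fun u hu => hasDerivAt_arcsin (by linarith [hu.1]) hu.2.ne)
    intervalIntegrable_one_div_sqrt_one_sub_sq, arcsin_one, arcsin_zero, sub_zero]

lemma IntervalIntegrable.of_bound_Ioo {f : ℝ → ℝ} {a b : ℝ} (hab : a ≤ b)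
    (hf : AEMeasurable f (volume.restrict (Ioo a b))) (C : ℝ)
    (hfC : ∀ x ∈ Ioo a b, ‖f x‖ ≤ C) : IntervalIntegrable f volume a b :=
  (intervalIntegrable_iff_integrableOn_Ioo_of_le hab).2 <|
    .of_bound measure_Ioo_lt_top hf.aestronglyMeasurable C
      (ae_restrict_of_forall_mem measurableSet_Ioo hfC)

lemma one_div_sqrt_le_sqrt_two_mul {x c : ℝ} (hx : 0 < x) (hc : x / 2 ≤ c) :
    1 / √c ≤ √2 * (1 / √x) := by
  calc 1 / √c ≤ 1 / √(x / 2) := one_div_le_one_div_of_le (by positivity) (sqrt_le_sqrt hc)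
    _ = √2 * (1 / √x) := by
      rw [sqrt_div hx.le]
      field_simp

noncomputable def perturbedKernel (a : ℝ) (z : ℝ → ℝ) (u : ℝ) : ℝ :=
  1 / √(1 - u ^ 2 + 2 * a * z u) + 1 / √(1 - u ^ 2 - 2 * a * z u)

section

variable {a : ℝ} {z : ℝ → ℝ}

lemma abs_mul_div_sqrt_one_sub_sq_le
    (hsmall : ∀ u ∈ Ioo (0 : ℝ) 1, |2 * a * z u| ≤ (1 - u ^ 2) / 2) {u : ℝ} (hu : u ∈ Ioo 0 1) :
    |a * z u / √(1 - u ^ 2)| ≤ 1 / 4 := by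
  obtain ⟨hu₀, hu₁⟩ := hu
  have hx : 0 < 1 - u ^ 2 := by nlinarith
  have hsx : 0 < √(1 - u ^ 2) := sqrt_pos.2 hx
  have haz : |a * z u| ≤ √(1 - u ^ 2) ^ 2 / 4 := by
    have := hsmall u ⟨hu₀, hu₁⟩
    rw [mul_assoc, abs_mul, abs_two] at this
    rw [sq_sqrt hx.le]
    linarith
  have hsx₁ : √(1 - u ^ 2) ≤ 1 := sqrt_le_one.2 (by nlinarith)
  rw [abs_div, abs_of_pos hsx, div_le_iff₀ hsx]
  nlinarith

lemma intervalIntegrable_mul_div_sqrt_one_sub_sq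
    (hz : AEMeasurable z (volume.restrict (Ioo 0 1)))
    (hsmall : ∀ u ∈ Ioo (0 : ℝ) 1, |2 * a * z u| ≤ (1 - u ^ 2) / 2) :
    IntervalIntegrable (fun u => a * z u / √(1 - u ^ 2)) volume 0 1 :=
  .of_bound_Ioo zero_le_one (by fun_prop) (1 / 4) fun _ hu =>
    abs_mul_div_sqrt_one_sub_sq_le hsmall hu

lemma intervalIntegrable_mul_div_sqrt_one_sub_sq_sq
    (hz : AEMeasurable z (volume.restrict (Ioo 0 1)))
    (hsmall : ∀ u ∈ Ioo (0 : ℝ) 1, |2 * a * z u| ≤ (1 - u ^ 2) / 2) :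
    IntervalIntegrable (fun u => (a * z u / √(1 - u ^ 2)) ^ 2) volume 0 1 :=
  .of_bound_Ioo zero_le_one (by fun_prop) ((1 / 4) ^ 2) fun _ hu => by
    rw [norm_pow, norm_eq_abs]
    exact pow_le_pow_left₀ (abs_nonneg _) (abs_mul_div_sqrt_one_sub_sq_le hsmall hu) 2

lemma intervalIntegrable_perturbedKernel (hz : AEMeasurable z (volume.restrict (Ioo 0 1)))
    (hsmall : ∀ u ∈ Ioo (0 : ℝ) 1, |2 * a * z u| ≤ (1 - u ^ 2) / 2) :
    IntervalIntegrable (perturbedKernel a z) volume 0 1 := by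
  have hdom := intervalIntegrable_one_div_sqrt_one_sub_sq.const_mul (2 * √2)
  rw [intervalIntegrable_iff_integrableOn_Ioo_of_le zero_le_one] at hdom ⊢
  refine hdom.mono' (by unfold perturbedKernel; fun_prop : AEMeasurable _ _).aestronglyMeasurable
    (ae_restrict_of_forall_mem measurableSet_Ioo fun u hu => ?_)
  have hx : 0 < 1 - u ^ 2 := by nlinarith [hu.1, hu.2]
  obtain ⟨hb₁, hb₂⟩ := abs_le.1 (hsmall u hu)
  rw [norm_of_nonneg (by unfold perturbedKernel; positivity), perturbedKernel]
  linarith [one_div_sqrt_le_sqrt_two_mul hx (c := 1 - u ^ 2 + 2 * a * z u) (by linarith),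
    one_div_sqrt_le_sqrt_two_mul hx (c := 1 - u ^ 2 - 2 * a * z u) (by linarith)]

lemma two_mul_one_div_sqrt_add_le_perturbedKernel
    (hsmall : ∀ u ∈ Ioo (0 : ℝ) 1, |2 * a * z u| ≤ (1 - u ^ 2) / 2) {u : ℝ} (hu : u ∈ Ioo 0 1) :
    2 * (1 / √(1 - u ^ 2)) + 3 * (a * z u / √(1 - u ^ 2)) ^ 2 ≤ perturbedKernel a z u := by
  have hx : 0 < 1 - u ^ 2 := by nlinarith [hu.1, hu.2]
  have key := two_div_sqrt_add_le_one_div_sqrt_add_add_one_div_sqrt_sub hx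
    (by nlinarith [hu.1]) ((hsmall u hu).trans_lt (by linarith))
  refine le_of_eq_of_le ?_ key
  rw [div_pow, sq_sqrt hx.le]
  ring

end

theorem integral_inequality_general (a : ℝ)
    (z : ℝ → ℝ) (hzc : ContinuousOn z (Icc (-1 : ℝ) 1))
    (hsmall : ∀ u ∈ Ioo (-1 : ℝ) 1, |2 * a * z u| ≤ (1 - u ^ 2) / 2) :
    π + 3 * a ^ 2 * (∫ u in (0:ℝ)..1, z u / Real.sqrt (1 - u ^ 2)) ^ 2 ≤
      ∫ u in (0:ℝ)..1,
        (1 / Real.sqrt (1 - u ^ 2 + 2 * a * z u) +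
          1 / Real.sqrt (1 - u ^ 2 - 2 * a * z u)) := by
  have hsmall' : ∀ u ∈ Ioo (0 : ℝ) 1, |2 * a * z u| ≤ (1 - u ^ 2) / 2 :=
    fun u hu => hsmall u ⟨by linarith [hu.1], hu.2⟩
  have hz : AEMeasurable z (volume.restrict (Ioo 0 1)) :=
    (hzc.mono fun u hu => ⟨by linarith [hu.1], hu.2.le⟩).aemeasurable measurableSet_Ioo
  have hbase := intervalIntegrable_one_div_sqrt_one_sub_sq.const_mul 2
  have hw := intervalIntegrable_mul_div_sqrt_one_sub_sq hz hsmall'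
  have hw_sq := (intervalIntegrable_mul_div_sqrt_one_sub_sq_sq hz hsmall').const_mul 3
  have hcs := sq_intervalIntegral_le_mul_intervalIntegral_sq zero_le_one hw
    (intervalIntegrable_mul_div_sqrt_one_sub_sq_sq hz hsmall')
  calc π + 3 * a ^ 2 * (∫ u in (0:ℝ)..1, z u / √(1 - u ^ 2)) ^ 2
      = 2 * (∫ u in (0:ℝ)..1, 1 / √(1 - u ^ 2))
        + 3 * (∫ u in (0:ℝ)..1, a * z u / √(1 - u ^ 2)) ^ 2 := by
        simp only [integral_one_div_sqrt_one_sub_sq, mul_div_assoc,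
          intervalIntegral.integral_const_mul]
        ring
    _ ≤ 2 * (∫ u in (0:ℝ)..1, 1 / √(1 - u ^ 2))
        + 3 * ∫ u in (0:ℝ)..1, (a * z u / √(1 - u ^ 2)) ^ 2 := by
        rw [sub_zero, one_mul] at hcs
        gcongr
    _ = ∫ u in (0:ℝ)..1, (2 * (1 / √(1 - u ^ 2)) + 3 * (a * z u / √(1 - u ^ 2)) ^ 2) := by
        rw [integral_add hbase hw_sq, intervalIntegral.integral_const_mul,
          intervalIntegral.integral_const_mul]
    _ ≤ ∫ u in (0:ℝ)..1, perturbedKernel a z u :=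
        integral_mono_on_of_le_Ioo zero_le_one (hbase.add hw_sq)
          (intervalIntegrable_perturbedKernel hz hsmall')
          fun _ hu => two_mul_one_div_sqrt_add_le_perturbedKernel hsmall' hu

/-- integral inequality for any continuous odd `z` on `[-1,1]` with
`1 - u² ± 2az(u) > 0` and `|2az(u)| ≤ (1-u²)/2` on `(-1,1)`, where `a ∈ [0,1)`:
`∫₀¹ [1/√(1-u²+2az) + 1/√(1-u²-2az)] du ≥ π + 3a² (∫₀¹ z/√(1-u²) du)²`. -/
theorem integral_inequality (a : ℝ) (ha0 : 0 ≤ a) (ha1 : a < 1)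
    (z : ℝ → ℝ) (hzc : ContinuousOn z (Icc (-1 : ℝ) 1))
    (hzodd : ∀ u ∈ Icc (-1 : ℝ) 1, z (-u) = -z u)
    (hpos : ∀ u ∈ Ioo (-1 : ℝ) 1,
      0 < 1 - u ^ 2 + 2 * a * z u ∧ 0 < 1 - u ^ 2 - 2 * a * z u)
    (hsmall : ∀ u ∈ Ioo (-1 : ℝ) 1, |2 * a * z u| ≤ (1 - u ^ 2) / 2) :
    π + 3 * a ^ 2 * (∫ u in (0:ℝ)..1, z u / Real.sqrt (1 - u ^ 2)) ^ 2 ≤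
      ∫ u in (0:ℝ)..1,
        (1 / Real.sqrt (1 - u ^ 2 + 2 * a * z u) +
          1 / Real.sqrt (1 - u ^ 2 - 2 * a * z u)) :=
  integral_inequality_general a z hzc hsmall
end
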